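/- With S, T' and A as in the setup and q ≥ 1, suppose A = Σ_{ℓ ∈ L} R^ℓ where L is a finite index set, each R^ℓ is a nonnegative matrix of rank at most one, and |L| ≤ r₊(S) + r₊(T'). Let L' ⊆ L be the set of ℓ such that R^ℓ has a nonzero entry in some position (i,(j,s)) with m < i ≤ m+p and s ≤ q. Then at least one ℓ ∈ L' is such that R^ℓ has a nonzero entry in some green position, i.e., some position (i,(j,s)) with i ≤ m and s ≤ q. -/
import Mathlib

open Matrix Module Submodule

lemma rank1_factor {α β : Type*} [Fintype α] [Fintype β] {M : Matrix α β ℝ}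
    (h : M.rank ≤ 1) : ∃ (u : α → ℝ) (w : β → ℝ), ∀ i c, M i c = u i * w c := by
  rw [Matrix.rank_eq_finrank_span_cols, Submodule.finrank_le_one_iff_isPrincipal] at h
  obtain ⟨v, hv⟩ := h
  have hcol : ∀ c, ∃ a : ℝ, a • v = Mᵀ c := fun c =>
    Submodule.mem_span_singleton.1 (hv ▸ Submodule.subset_span ⟨c, rfl⟩)
  choose w hw using hcol
  exact ⟨v, w, fun i c => by
    have := congrFun (hw c) i
    simp only [Pi.smul_apply, smul_eq_mul] at this
    rw [show M i c = Mᵀ c i from rfl, ← this]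
    ring⟩

lemma rank_outer_le_one {α β : Type*} [Fintype α] [Fintype β] (u : α → ℝ) (w : β → ℝ) :
    (Matrix.of fun i c => u i * w c).rank ≤ 1 := by
  rw [Matrix.rank_eq_finrank_span_cols]
  have hle : Submodule.span ℝ (Set.range (Matrix.of fun i c => u i * w c)ᵀ)
      ≤ Submodule.span ℝ {u} := by
    rw [Submodule.span_le]
    rintro _ ⟨c, rfl⟩
    exact Submodule.mem_span_singleton.2 ⟨w c, by funext i; simp [mul_comm]⟩
  refine le_trans (Submodule.finrank_mono hle) ?_
  by_cases hu : u = 0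
  · subst hu
    rw [Submodule.span_zero_singleton]
    simp
  · rw [finrank_span_singleton hu]



/-- The nonnegative rank of a matrix `M` with nonnegative real entries: the smallest `r`
such that `M` is a sum of `r` nonnegative matrices each of rank at most one. -/
noncomputable def nnegRank {α β : Type*} [Fintype α] [Fintype β] (M : Matrix α β ℝ) : ℕ :=
  sInf { r : ℕ | ∃ R : Fin r → Matrix α β ℝ,
      (∀ ℓ i j, 0 ≤ R ℓ i j) ∧ (∀ ℓ, (R ℓ).rank ≤ 1) ∧ M = ∑ ℓ, R ℓ }

lemma nnegRank_le_card {α β ι : Type*} [Fintype α] [Fintype β] [Fintype ι]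
    (M : Matrix α β ℝ) (R : ι → Matrix α β ℝ)
    (h1 : ∀ ℓ i j, 0 ≤ R ℓ i j) (h2 : ∀ ℓ, (R ℓ).rank ≤ 1) (h3 : M = ∑ ℓ, R ℓ) :
    nnegRank M ≤ Fintype.card ι := by
  apply Nat.sInf_le
  refine ⟨R ∘ (Fintype.equivFin ι).symm, fun ℓ i j => h1 _ i j, fun ℓ => h2 _, ?_⟩
  rw [h3]
  exact (Equiv.sum_comp (Fintype.equivFin ι).symm R).symm


/-- The `(m+p+1) × (n·(q+1))` matrix `A` of the setup, built from an `m × n` matrix `S` and a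
`p × q` matrix `T'`: its column indexed by `(j, s)` is `(S_j ; t'_s ; 0)` for `s ≤ q`
(0-indexed: `s < q`) and `(S_j ; 0 ; 1)` for `s = q+1` (0-indexed: `s = q`). -/
def buildA {m n p q : ℕ} (S : Matrix (Fin m) (Fin n) ℝ) (T' : Matrix (Fin p) (Fin q) ℝ) :
    Matrix (Fin (m + p + 1)) (Fin n × Fin (q + 1)) ℝ :=
  fun i js =>
    if h1 : (i : ℕ) < m then S ⟨i, h1⟩ js.1
    else if h2 : (i : ℕ) < m + p then
      (if h3 : (js.2 : ℕ) < q then T' ⟨(i : ℕ) - m, by omega⟩ ⟨js.2, h3⟩ else 0)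
    else (if (js.2 : ℕ) < q then 0 else 1)

/-- Claim 2: given a decomposition `A = Σ_{ℓ ∈ L} R^ℓ` into nonnegative rank-at-most-one
matrices with `|L| ≤ r₊(S) + r₊(T')`, with `q ≥ 1` (and `n ≥ 1`, implicit in the setup),
at least one `ℓ` in `L'` (the set of `ℓ` whose matrix has support in a red position, i.e.
row `i` with `m ≤ i < m+p` (0-indexed) and column `(j,s)` with `s < q`) is such that `R^ℓ`
has support in a green position, i.e. some position `(i, (j, s))` with `i < m` and `s < q`
(0-indexed). -/
theorem claim2 {m n p q : ℕ}
    (S : Matrix (Fin m) (Fin n) ℝ) (T' : Matrix (Fin p) (Fin q) ℝ)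
    (hS : ∀ i j, 0 ≤ S i j) (hT' : ∀ i j, 0 ≤ T' i j) (hq : 1 ≤ q) (hn : 1 ≤ n)
    {L : Type*} [Fintype L] (R : L → Matrix (Fin (m + p + 1)) (Fin n × Fin (q + 1)) ℝ)
    (hpos : ∀ ℓ i js, 0 ≤ R ℓ i js) (hrank : ∀ ℓ, (R ℓ).rank ≤ 1)
    (hsum : buildA S T' = ∑ ℓ, R ℓ)
    (hcard : Fintype.card L ≤ nnegRank S + nnegRank T') :
    ∃ ℓ : L,
      (∃ (i : Fin (m + p + 1)) (j : Fin n) (s : Fin (q + 1)),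
        m ≤ (i : ℕ) ∧ (i : ℕ) < m + p ∧ (s : ℕ) < q ∧ R ℓ i (j, s) ≠ 0) ∧
      (∃ (i : Fin (m + p + 1)) (j : Fin n) (s : Fin (q + 1)),
        (i : ℕ) < m ∧ (s : ℕ) < q ∧ R ℓ i (j, s) ≠ 0) := by
  classical
  by_contra hcon
  push_neg at hcon
  -- factorizations
  choose u w huw using fun ℓ => rank1_factor (hrank ℓ)
  set lastRow : Fin (m + p + 1) := ⟨m + p, by omega⟩ with hlastRow
  -- entrywise identity for the sum
  have hsum' : ∀ i c, buildA S T' i c = ∑ ℓ, R ℓ i c := by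
    intro i c
    have := congrFun (congrFun hsum i) c
    simpa [Matrix.sum_apply] using this
  -- entrywise bound
  have hzero : ∀ ℓ i c, buildA S T' i c = 0 → R ℓ i c = 0 := by
    intro ℓ i c h0
    have h1 : ∑ ℓ', R ℓ' i c = 0 := by rw [← hsum', h0]
    have := (Finset.sum_eq_zero_iff_of_nonneg (fun ℓ' _ => hpos ℓ' i c)).1 h1
    exact this ℓ (Finset.mem_univ ℓ)
  -- buildA evaluations
  have hAlast0 : ∀ (j : Fin n) (s : Fin (q + 1)), (s : ℕ) < q →
      buildA S T' lastRow (j, s) = 0 := by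
    intro j s hs
    show (if h1 : ((lastRow : Fin (m+p+1)) : ℕ) < m then _ else _) = (0:ℝ)
    rw [dif_neg (show ¬ (m + p < m) by omega), dif_neg (show ¬ (m + p < m + p) by omega),
      if_pos hs]
  have hAlastq : ∀ (j : Fin n),
      buildA S T' lastRow (j, ⟨q, by omega⟩) = 1 := by
    intro j
    show (if h1 : ((lastRow : Fin (m+p+1)) : ℕ) < m then _ else _) = (1:ℝ)
    rw [dif_neg (show ¬ (m + p < m) by omega), dif_neg (show ¬ (m + p < m + p) by omega),
      if_neg (show ¬ (q < q) by omega)]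
  have hArowT : ∀ (i : Fin p) (j : Fin n) (s : Fin q),
      buildA S T' ⟨m + i, by omega⟩ (j, ⟨s, by omega⟩) = T' i s := by
    intro i j s
    show (if h1 : ((⟨m + (i:ℕ), by omega⟩ : Fin (m+p+1)) : ℕ) < m then _ else _) = _
    rw [dif_neg (show ¬ (m + (i:ℕ) < m) by omega),
      dif_pos (show m + (i:ℕ) < m + p by have := i.isLt; omega),
      dif_pos (show (s:ℕ) < q from s.isLt)]
    simp
  have hArowS : ∀ (i : Fin m) (j : Fin n) (s : Fin (q + 1)),
      buildA S T' ⟨i, by omega⟩ (j, s) = S i j := by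
    intro i j s
    show (if h1 : ((⟨(i:ℕ), by omega⟩ : Fin (m+p+1)) : ℕ) < m then _ else _) = _
    rw [dif_pos (show (i:ℕ) < m from i.isLt)]
  -- cross lemma from rank one
  have hcross : ∀ ℓ (i i' : Fin (m + p + 1)) (c c' : Fin n × Fin (q + 1)),
      R ℓ i c ≠ 0 → R ℓ i' c' ≠ 0 → R ℓ i c' ≠ 0 := by
    intro ℓ i i' c c' h1 h2
    rw [huw] at h1 h2 ⊢
    exact mul_ne_zero (left_ne_zero_of_mul h1) (right_ne_zero_of_mul h2)
  -- predicates
  set Red : L → Prop := fun ℓ => ∃ (i : Fin (m + p + 1)) (j : Fin n) (s : Fin (q + 1)),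
      m ≤ (i : ℕ) ∧ (i : ℕ) < m + p ∧ (s : ℕ) < q ∧ R ℓ i (j, s) ≠ 0 with hRed
  set Bot : L → Prop := fun ℓ => ∃ c, R ℓ lastRow c ≠ 0 with hBot
  -- Red matrices vanish on the first m rows
  have hredS : ∀ ℓ, Red ℓ → ∀ (i : Fin (m + p + 1)) c, (i : ℕ) < m → R ℓ i c = 0 := by
    rintro ℓ ⟨i₀, j₀, s₀, h1, h2, h3, h4⟩ i c him
    by_contra hne
    exact (hcross ℓ i i₀ c (j₀, s₀) hne h4)
      (hcon ℓ ⟨i₀, j₀, s₀, h1, h2, h3, h4⟩ i j₀ s₀ him h3)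
  -- Red matrices vanish on the last row
  have hredLast : ∀ ℓ, Red ℓ → ∀ c, R ℓ lastRow c = 0 := by
    rintro ℓ ⟨i₀, j₀, s₀, h1, h2, h3, h4⟩ c
    by_contra hne
    exact hcross ℓ lastRow i₀ c (j₀, s₀) hne h4 (hzero ℓ _ _ (hAlast0 j₀ s₀ h3))
  -- Bot matrices vanish on columns with s < q
  have hbotCol : ∀ ℓ, Bot ℓ → ∀ i (j : Fin n) (s : Fin (q + 1)), (s : ℕ) < q →
      R ℓ i (j, s) = 0 := by
    rintro ℓ ⟨c₀, hc₀⟩ i j s hs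
    by_contra hne
    exact hcross ℓ lastRow i c₀ (j, s) hc₀ hne (hzero ℓ _ _ (hAlast0 j s hs))
  -- finsets
  set RedS : Finset L := Finset.univ.filter Red with hRedS
  set BotS : Finset L := Finset.univ.filter Bot with hBotS
  set Rest : Finset L := Finset.univ \ (RedS ∪ BotS) with hRest
  have hdisj : Disjoint RedS BotS := by
    rw [Finset.disjoint_left]
    intro ℓ hr hb
    rw [hRedS, Finset.mem_filter] at hr
    rw [hBotS, Finset.mem_filter] at hb
    obtain ⟨i₀, j₀, s₀, h1, h2, h3, h4⟩ := hr.2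
    exact h4 (hbotCol ℓ hb.2 i₀ j₀ s₀ h3)
  -- T' decomposition over RedS
  have hT'dec : T' = ∑ ℓ ∈ RedS,
      (Matrix.of fun (i : Fin p) (s : Fin q) =>
        R ℓ ⟨m + i, by omega⟩ ((⟨0, by omega⟩ : Fin n), ⟨s, by omega⟩)) := by
    ext i s
    rw [Matrix.sum_apply]
    have := hsum' ⟨m + i, by omega⟩ ((⟨0, by omega⟩ : Fin n), ⟨s, by omega⟩)
    rw [hArowT i ⟨0, by omega⟩ s] at this
    rw [this]
    symm
    apply Finset.sum_subset (Finset.subset_univ _)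
    intro ℓ _ hℓ
    rw [hRedS, Finset.mem_filter] at hℓ
    push_neg at hℓ
    by_contra hne
    exact hℓ (Finset.mem_univ ℓ) ⟨⟨m + i, by omega⟩, ⟨0, by omega⟩, ⟨s, by omega⟩,
      by simp, by simpa using i.isLt, by simpa using s.isLt, hne⟩
  have hT'le : nnegRank T' ≤ RedS.card := by
    rw [← Fintype.card_coe]
    apply nnegRank_le_card T'
      (fun ℓ : RedS => Matrix.of fun (i : Fin p) (s : Fin q) =>
        R ℓ.1 ⟨m + i, by omega⟩ ((⟨0, by omega⟩ : Fin n), ⟨s, by omega⟩))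
    · intro ℓ i s; exact hpos _ _ _
    · intro ℓ
      have heq : (Matrix.of fun (i : Fin p) (s : Fin q) =>
          R ℓ.1 ⟨m + i, by omega⟩ ((⟨0, by omega⟩ : Fin n), ⟨s, by omega⟩)) =
          Matrix.of fun i s => (fun i : Fin p => u ℓ.1 ⟨m + i, by omega⟩) i *
            (fun s : Fin q => w ℓ.1 ((⟨0, by omega⟩ : Fin n), ⟨s, by omega⟩)) s := by
        ext i s; exact huw ℓ.1 _ _
      rw [heq]
      exact rank_outer_le_one _ _
    · rw [hT'dec]
      exact (Finset.sum_coe_sort RedS _).symm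
  -- S decomposition over Rest
  have hSdec : S = ∑ ℓ ∈ Rest,
      (Matrix.of fun (i : Fin m) (j : Fin n) =>
        R ℓ ⟨i, by omega⟩ (j, (⟨0, by omega⟩ : Fin (q + 1)))) := by
    ext i j
    rw [Matrix.sum_apply]
    have := hsum' ⟨i, by omega⟩ (j, (⟨0, by omega⟩ : Fin (q + 1)))
    rw [hArowS i j _] at this
    rw [this]
    symm
    apply Finset.sum_subset (Finset.subset_univ _)
    intro ℓ _ hℓ
    rw [hRest, Finset.mem_sdiff] at hℓ
    push_neg at hℓ
    have hmem : ℓ ∈ RedS ∪ BotS := hℓ (Finset.mem_univ ℓ)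
    rw [Finset.mem_union] at hmem
    rcases hmem with hr | hb
    · rw [hRedS, Finset.mem_filter] at hr
      exact hredS ℓ hr.2 ⟨i, by omega⟩ _ (by simpa using i.isLt)
    · rw [hBotS, Finset.mem_filter] at hb
      exact hbotCol ℓ hb.2 ⟨i, by omega⟩ j ⟨0, by omega⟩ (show (0:ℕ) < q by omega)
  have hSle : nnegRank S ≤ Rest.card := by
    rw [← Fintype.card_coe]
    apply nnegRank_le_card S
      (fun ℓ : Rest => Matrix.of fun (i : Fin m) (j : Fin n) =>
        R ℓ.1 ⟨i, by omega⟩ (j, (⟨0, by omega⟩ : Fin (q + 1))))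
    · intro ℓ i j; exact hpos _ _ _
    · intro ℓ
      have heq : (Matrix.of fun (i : Fin m) (j : Fin n) =>
          R ℓ.1 ⟨i, by omega⟩ (j, (⟨0, by omega⟩ : Fin (q + 1)))) =
          Matrix.of fun i j => (fun i : Fin m => u ℓ.1 ⟨i, by omega⟩) i *
            (fun j : Fin n => w ℓ.1 (j, (⟨0, by omega⟩ : Fin (q + 1)))) j := by
        ext i j; exact huw ℓ.1 _ _
      rw [heq]
      exact rank_outer_le_one _ _
    · rw [hSdec]
      exact (Finset.sum_coe_sort Rest _).symm
  -- BotS nonempty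
  have hbotNe : BotS.Nonempty := by
    by_contra hne
    rw [Finset.not_nonempty_iff_eq_empty] at hne
    have h1 : (1 : ℝ) = ∑ ℓ, R ℓ lastRow ((⟨0, by omega⟩ : Fin n), ⟨q, by omega⟩) := by
      rw [← hsum', hAlastq]
    have h0 : ∀ ℓ ∈ Finset.univ, R ℓ lastRow ((⟨0, by omega⟩ : Fin n), ⟨q, by omega⟩) = 0 := by
      intro ℓ _
      by_contra hne2
      have : ℓ ∈ BotS := by
        rw [hBotS, Finset.mem_filter]
        exact ⟨Finset.mem_univ ℓ, ⟨_, hne2⟩⟩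
      rw [hne] at this
      exact absurd this (Finset.notMem_empty ℓ)
    rw [Finset.sum_eq_zero h0] at h1
    norm_num at h1
  have h1le : 1 ≤ BotS.card := Finset.card_pos.2 hbotNe
  -- counting
  have hunion : (RedS ∪ BotS).card = RedS.card + BotS.card :=
    Finset.card_union_of_disjoint hdisj
  have hpart : Rest.card + (RedS ∪ BotS).card = Fintype.card L := by
    rw [hRest, Finset.card_sdiff_add_card_eq_card (Finset.subset_univ _), Finset.card_univ]
  omega
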